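/- In Setup B, let J ∈ Λ with n+1 ∈ J, let c = (c_i)_{i∈J} be a family of integers, and fix a choice of i₀ ∈ I'∖J defining F(J,c). Then there exists a real number s with c_{n+1} ≤ s < c_{n+1} + 1 such that D(J,c;s) ⊆ F(J,c). -/

import Mathlib

open scoped RealInnerProductSpace BigOperators

noncomputable section

/-- Euclidean space `ℝⁿ` with the standard inner product. -/
abbrev E (n : ℕ) : Type := EuclideanSpace ℝ (Fin n)

/-- The index set `I' = {1,…,n'}` inside `Ī = {1,…,n+1}` (index `Fin.last n`
plays the role of `n+1`). -/
def Iprime (n n' : ℕ) : Finset (Fin (n + 1)) := Finset.univ.filter fun i => i.val < n'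

/-- `C(J,c) := {x ∈ ℝⁿ : ⟨x, b_i⟩ > c_i for all i ∈ J}`. -/
def CSet (n : ℕ) (b : Fin (n + 1) → E n) (J : Finset (Fin (n + 1)))
    (c : Fin (n + 1) → ℤ) : Set (E n) :=
  {x | ∀ i ∈ J, (c i : ℝ) < ⟪x, b i⟫}

/-- A multi-index `𝔪 = (m_i)_{i ∈ I'∖{i₀}}` is admissible if `m_i ≥ 0` for every
`i ∈ I' ∩ J` (recall `i₀ ∉ J`). -/
def Admissible (n n' : ℕ) (J : Finset (Fin (n + 1))) (m : Fin (n + 1) → ℤ) : Prop :=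
  ∀ i ∈ Iprime n n' ∩ J, 0 ≤ m i

/-- The ceiling bound
`⌈(c_{n+1} − Σ_{i∈I'∩J} α_i(c_i+m_i) − Σ_{i∈I'∩K₁} α_i m_i)/α_{i₀}⌉`,
where `K₁ = Ī∖(J∪{i₀})`, so `I'∩K₁ = (I'∖J)∖{i₀}`. -/
def ceilB (n n' : ℕ) (α : Fin (n + 1) → ℚ) (J : Finset (Fin (n + 1)))
    (i₀ : Fin (n + 1)) (c m : Fin (n + 1) → ℤ) : ℤ :=
  ⌈((c (Fin.last n) : ℚ) - ∑ i ∈ Iprime n n' ∩ J, α i * ((c i : ℚ) + (m i : ℚ))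
      - ∑ i ∈ (Iprime n n' \ J).erase i₀, α i * (m i : ℚ)) / α i₀⌉

/-- `V(J,c,𝔪)` as in Setup B. -/
def VSet (n n' : ℕ) (b : Fin (n + 1) → E n) (α : Fin (n + 1) → ℚ)
    (J : Finset (Fin (n + 1))) (i₀ : Fin (n + 1)) (c m : Fin (n + 1) → ℤ) :
    Set (E n) :=
  {x | (∀ i ∈ Iprime n n' ∩ J, ((c i : ℝ) + (m i : ℝ)) < ⟪x, b i⟫)
    ∧ (∀ i ∈ (Iprime n n' \ J).erase i₀, (m i : ℝ) < ⟪x, b i⟫)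
    ∧ (∀ i ∈ (J \ Iprime n n').erase (Fin.last n), (c i : ℝ) < ⟪x, b i⟫)
    ∧ ((ceilB n n' α J i₀ c m : ℝ) < ⟪x, b i₀⟫)}

/-- `F(J,c) := ⋃_{𝔪 admissible} V(J,c,𝔪)` (for `n+1 ∈ J`, with the choice `i₀`). -/
def FSetB (n n' : ℕ) (b : Fin (n + 1) → E n) (α : Fin (n + 1) → ℚ)
    (J : Finset (Fin (n + 1))) (i₀ : Fin (n + 1)) (c : Fin (n + 1) → ℤ) : Set (E n) :=
  {x | ∃ m : Fin (n + 1) → ℤ, Admissible n n' J m ∧ x ∈ VSet n n' b α J i₀ c m}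

/-- `F(J,c)` in general: the union above when `n+1 ∈ J`, and `C(J,c)` otherwise. -/
def FSetB' (n n' : ℕ) (b : Fin (n + 1) → E n) (α : Fin (n + 1) → ℚ)
    (J : Finset (Fin (n + 1))) (i₀ : Fin (n + 1)) (c : Fin (n + 1) → ℤ) : Set (E n) :=
  if Fin.last n ∈ J then FSetB n n' b α J i₀ c else CSet n b J c

/-- `D(J,c;s) := {x : ⟨x,b_i⟩ > c_i for all i ∈ J∩I, and ⟨x,b_{n+1}⟩ ≥ s}`. -/
def DSet (n : ℕ) (b : Fin (n + 1) → E n) (J : Finset (Fin (n + 1)))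
    (c : Fin (n + 1) → ℤ) (s : ℝ) : Set (E n) :=
  {x | (∀ i ∈ J.erase (Fin.last n), (c i : ℝ) < ⟪x, b i⟫) ∧ s ≤ ⟪x, b (Fin.last n)⟫}

/-! Put `y_i = ⟪x, b_i⟫` and let `t_i` be the largest integer strictly below `y_i`; the
multi-index `𝔪` is read off from `t`, and the condition on `⟪x, b_{i₀}⟫` then amounts to
`c_{n+1} ≤ ∑_{I'} α_i t_i`. Since `y_{n+1} = ∑_{I'} α_i y_i ≤ ∑_{I'} α_i t_i + ∑_{I'} α_i`, that
sum is at least `s - ∑_{I'} α_i`. It also lies in `(1/N)ℤ` for a common denominator `N` of the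
`α_i`, so every `s > c_{n+1} + ∑_{I'} α_i - 1/N` forces it up to `c_{n+1}`; and
`s = c_{n+1} + (1 - 1/(2N)) ∑_{I'} α_i` also satisfies `c_{n+1} ≤ s < c_{n+1} + 1`. -/

open Finset

def ceilPred (y : ℝ) : ℤ := ⌈y⌉ - 1

lemma ceilPred_lt (y : ℝ) : (ceilPred y : ℝ) < y := by
  have := Int.ceil_lt_add_one y
  push_cast [ceilPred]
  linarith

lemma le_ceilPred_add_one (y : ℝ) : y ≤ ceilPred y + 1 := by
  have := Int.le_ceil y
  push_cast [ceilPred]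
  linarith

lemma le_ceilPred_iff {z : ℤ} {y : ℝ} : z ≤ ceilPred y ↔ (z : ℝ) < y := by
  rw [ceilPred, ← Int.lt_ceil]
  omega

lemma sum_mul_le_sum_mul_ceilPred_add_sum {ι : Type*} (s : Finset ι) {w y : ι → ℝ}
    (hw : ∀ i ∈ s, 0 ≤ w i) :
    ∑ i ∈ s, w i * y i ≤ ∑ i ∈ s, w i * ceilPred (y i) + ∑ i ∈ s, w i := by
  rw [← sum_add_distrib]
  exact sum_le_sum fun i hi => by
    nlinarith [hw i hi, le_ceilPred_add_one (y i)]

lemma exists_nat_mul_eq_int {ι : Type*} [Fintype ι] (α : ι → ℚ) :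
    ∃ N : ℕ, 0 < N ∧ ∀ i, ∃ z : ℤ, (N : ℚ) * α i = z := by
  refine ⟨∏ i, (α i).den, prod_pos fun i _ => (α i).den_pos, fun i => ?_⟩
  obtain ⟨k, hk⟩ := dvd_prod_of_mem (fun j => (α j).den) (mem_univ i)
  refine ⟨(α i).num * k, ?_⟩
  rw [hk]
  push_cast
  rw [← Rat.mul_den_eq_num]
  ring

lemma exists_nat_mul_sum_eq_int {ι : Type*} (s : Finset ι) {N : ℕ} {α : ι → ℚ}
    (hα : ∀ i, ∃ z : ℤ, (N : ℚ) * α i = z) (t : ι → ℤ) :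
    ∃ z : ℤ, (N : ℚ) * ∑ i ∈ s, α i * t i = z := by
  choose a ha using hα
  refine ⟨∑ i ∈ s, a i * t i, ?_⟩
  push_cast
  rw [mul_sum]
  exact sum_congr rfl fun i _ => by rw [← ha i]; ring

lemma int_le_of_sub_one_div_lt {N : ℕ} (hN : 0 < N) {q : ℚ} (hq : ∃ z : ℤ, (N : ℚ) * q = z)
    {c : ℤ} (h : c - 1 / N < q) : (c : ℚ) ≤ q := by
  obtain ⟨z, hz⟩ := hq
  have hN' : (0 : ℚ) < N := by exact_mod_cast hN
  have hlt : (N : ℚ) * c < z + 1 := by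
    rw [← hz]
    have := mul_lt_mul_of_pos_left h hN'
    rw [mul_sub, mul_one_div_cancel hN'.ne'] at this
    linarith
  have hle : (N : ℚ) * c ≤ z := by exact_mod_cast Int.lt_add_one_iff.mp (by exact_mod_cast hlt)
  exact le_of_mul_le_mul_left (hz ▸ hle) hN'

lemma ceil_div_le_of_le_sum {ι : Type*} [DecidableEq ι] {s : Finset ι} {a : ι → ℚ}
    {t : ι → ℤ} {i₀ : ι} (hi₀ : i₀ ∈ s) (ha : 0 < a i₀) {c : ℚ}
    (h : c ≤ ∑ i ∈ s, a i * t i) :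
    ⌈(c - ∑ i ∈ s.erase i₀, a i * t i) / a i₀⌉ ≤ t i₀ := by
  rw [← add_sum_erase s _ hi₀] at h
  rw [Int.ceil_le, div_le_iff₀ ha]
  linarith

lemma mem_Iprime {n n' : ℕ} {i : Fin (n + 1)} : i ∈ Iprime n n' ↔ i.val < n' := by
  simp [Iprime]

lemma ne_last_of_mem_Iprime {n n' : ℕ} (hn'n : n' ≤ n) {i : Fin (n + 1)} (hi : i ∈ Iprime n n') :
    i ≠ Fin.last n := by
  rintro rfl
  simp [mem_Iprime] at hi
  omega

def multiIndexOf {ι : Type*} [DecidableEq ι] (J : Finset ι) (c t : ι → ℤ) : ι → ℤ :=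
  fun i => if i ∈ J then t i - c i else t i

section SetupB

variable {n n' : ℕ} {b : Fin (n + 1) → E n} {α : Fin (n + 1) → ℚ}
  {J : Finset (Fin (n + 1))} {i₀ : Fin (n + 1)} {c : Fin (n + 1) → ℤ}

lemma ceilB_multiIndexOf (hi₀ : i₀ ∉ J) (t : Fin (n + 1) → ℤ) :
    ceilB n n' α J i₀ c (multiIndexOf J c t) =
      ⌈((c (Fin.last n) : ℚ) - ∑ i ∈ (Iprime n n').erase i₀, α i * t i) / α i₀⌉ := by
  have hinter : (Iprime n n').erase i₀ ∩ J = Iprime n n' ∩ J := by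
    rw [erase_inter, erase_eq_of_notMem fun h => hi₀ (mem_inter.mp h).2]
  rw [ceilB, ← sum_inter_add_sum_sdiff ((Iprime n n').erase i₀) J, hinter, erase_sdiff_comm,
    sub_sub]
  congr 4
  · exact sum_congr rfl fun i hi => by simp [multiIndexOf, (mem_inter.mp hi).2]
  · exact sum_congr rfl fun i hi => by
      simp [multiIndexOf, (mem_sdiff.mp (mem_of_mem_erase hi)).2]

lemma inner_last_eq_sum (hlast : b (Fin.last n) = ∑ i ∈ Iprime n n', (α i : ℝ) • b i)
    (x : E n) : ⟪x, b (Fin.last n)⟫ = ∑ i ∈ Iprime n n', (α i : ℝ) * ⟪x, b i⟫ := by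
  simp [hlast, inner_sum, real_inner_smul_right]

lemma mem_FSetB_of_lt_inner_last (hn'n : n' ≤ n) (hα : ∀ i : Fin (n + 1), i.val < n' → 0 < α i)
    (hlast : b (Fin.last n) = ∑ i ∈ Iprime n n', (α i : ℝ) • b i)
    (hi₀ : i₀ ∈ Iprime n n' \ J) {N : ℕ} (hN : 0 < N) (hNα : ∀ i, ∃ z : ℤ, (N : ℚ) * α i = z)
    {x : E n} (hxJ : ∀ i ∈ J.erase (Fin.last n), (c i : ℝ) < ⟪x, b i⟫)
    (hxlast : c (Fin.last n) + ∑ i ∈ Iprime n n', (α i : ℝ) - 1 / N < ⟪x, b (Fin.last n)⟫) :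
    x ∈ FSetB n n' b α J i₀ c := by
  obtain ⟨hi₀I, hi₀J⟩ := mem_sdiff.mp hi₀
  set t : Fin (n + 1) → ℤ := fun i => ceilPred ⟪x, b i⟫
  have hαnonneg : ∀ i ∈ Iprime n n', (0 : ℝ) ≤ α i := fun i hi => by
    exact_mod_cast (hα i (mem_Iprime.mp hi)).le
  have hsum : (c (Fin.last n) : ℚ) ≤ ∑ i ∈ Iprime n n', α i * t i := by
    refine int_le_of_sub_one_div_lt hN (exists_nat_mul_sum_eq_int _ hNα t) ?_
    have := sum_mul_le_sum_mul_ceilPred_add_sum _ hαnonneg (y := fun i => ⟪x, b i⟫)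
    rw [← inner_last_eq_sum hlast] at this
    refine (Rat.cast_lt (K := ℝ)).mp ?_
    push_cast
    linarith
  have hcJ : ∀ i ∈ Iprime n n' ∩ J, (c i : ℝ) < ⟪x, b i⟫ := fun i hi =>
    hxJ i (mem_erase.mpr ⟨ne_last_of_mem_Iprime hn'n (mem_inter.mp hi).1, (mem_inter.mp hi).2⟩)
  refine ⟨multiIndexOf J c t, fun i hi => ?_, ⟨fun i hi => ?_, fun i hi => ?_, fun i hi => ?_, ?_⟩⟩
  · simpa [multiIndexOf, (mem_inter.mp hi).2] using le_ceilPred_iff.mpr (hcJ i hi)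
  · simpa [multiIndexOf, (mem_inter.mp hi).2] using ceilPred_lt ⟪x, b i⟫
  · simpa [multiIndexOf, (mem_sdiff.mp (mem_of_mem_erase hi)).2] using ceilPred_lt ⟪x, b i⟫
  · obtain ⟨hi, hiJ⟩ := mem_erase.mp hi
    exact hxJ i (mem_erase.mpr ⟨hi, (mem_sdiff.mp hiJ).1⟩)
  · rw [ceilB_multiIndexOf hi₀J]
    calc _ ≤ (t i₀ : ℝ) := by
          exact_mod_cast ceil_div_le_of_le_sum hi₀I (hα i₀ (mem_Iprime.mp hi₀I)) hsum
      _ < _ := ceilPred_lt _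

end SetupB

theorem stmt3_general (n n' : ℕ) (hn'n : n' ≤ n)
    (b : Fin (n + 1) → E n) (α : Fin (n + 1) → ℚ)
    (hα : ∀ i : Fin (n + 1), i.val < n' → 0 < α i)
    (hαsum : ∑ i ∈ Iprime n n', α i ≤ 1)
    (hlast : b (Fin.last n) = ∑ i ∈ Iprime n n', (α i : ℝ) • b i)
    (J : Finset (Fin (n + 1)))
    (i₀ : Fin (n + 1)) (hi₀ : i₀ ∈ Iprime n n' \ J)
    (c : Fin (n + 1) → ℤ) :
    ∃ s : ℝ, (c (Fin.last n) : ℝ) ≤ s ∧ s < (c (Fin.last n) : ℝ) + 1 ∧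
      DSet n b J c s ⊆ FSetB n n' b α J i₀ c := by
  obtain ⟨N, hN, hNα⟩ := exists_nat_mul_eq_int α
  set S : ℝ := ∑ i ∈ Iprime n n', (α i : ℝ)
  have hS0 : 0 ≤ S := sum_nonneg fun i hi => by exact_mod_cast (hα i (mem_Iprime.mp hi)).le
  have hS1 : S ≤ 1 := by simpa [S] using (Rat.cast_le (K := ℝ)).mpr hαsum
  obtain ⟨ε, hε0, hεN⟩ : ∃ ε : ℝ, 0 < ε ∧ 1 / (N : ℝ) = 2 * ε :=
    ⟨1 / (2 * N), by positivity, by field_simp⟩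
  have hN1 : 1 / (N : ℝ) ≤ 1 := div_le_one_of_le₀ (by exact_mod_cast hN) (Nat.cast_nonneg N)
  refine ⟨c (Fin.last n) + (1 - ε) * S, by nlinarith, by nlinarith,
    fun x hx => mem_FSetB_of_lt_inner_last hn'n hα hlast hi₀ hN hNα hx.1 ?_⟩
  nlinarith [hx.2]

/-- Setup B: for `J ∈ Λ` with `n+1 ∈ J`, integers `c = (c_i)_{i∈J}`, and
a choice `i₀ ∈ I'∖J`, there is a real number `s` with `c_{n+1} ≤ s < c_{n+1} + 1` such
that `D(J,c;s) ⊆ F(J,c)`. -/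
theorem stmt3 (n n' : ℕ) (hn'1 : 1 ≤ n') (hn'n : n' ≤ n)
    (b : Fin (n + 1) → E n) (α : Fin (n + 1) → ℚ)
    (hb : LinearIndependent ℝ fun i : Fin n => b i.castSucc)
    (hspan : Submodule.span ℝ (Set.range fun i : Fin n => b i.castSucc) = ⊤)
    (hα : ∀ i : Fin (n + 1), i.val < n' → 0 < α i)
    (hαsum : ∑ i ∈ Iprime n n', α i ≤ 1)
    (hlast : b (Fin.last n) = ∑ i ∈ Iprime n n', (α i : ℝ) • b i)
    (J : Finset (Fin (n + 1))) (hJne : J ≠ Finset.univ)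
    (hJI : ¬ Iprime n n' ⊆ J) (hJlast : Fin.last n ∈ J)
    (i₀ : Fin (n + 1)) (hi₀ : i₀ ∈ Iprime n n' \ J)
    (c : Fin (n + 1) → ℤ) :
    ∃ s : ℝ, (c (Fin.last n) : ℝ) ≤ s ∧ s < (c (Fin.last n) : ℝ) + 1 ∧
      DSet n b J c s ⊆ FSetB n n' b α J i₀ c :=
  stmt3_general n n' hn'n b α hα hαsum hlast J i₀ hi₀ c
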